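/- The Dirac join D = D₁ ⊞ D₂ of two disjoint non-empty digraphs is critical if and only if both D₁ and D₂ are critical. -/

import Mathlib

/-- A finite simple digraph with vertices drawn from `ℕ`:
no loops, no parallel arcs in the same direction (arcs form a relation),
but antiparallel arcs are allowed. -/
structure Digraph' where
  verts : Finset ℕ
  Adj : ℕ → ℕ → Prop
  adj_mem : ∀ ⦃u v⦄, Adj u v → u ∈ verts ∧ v ∈ verts
  loopless : ∀ v, ¬ Adj v v

namespace Digraph'

/-- The order (number of vertices) of a digraph. -/
def order (D : Digraph') : ℕ := D.verts.card

/-- The number of arcs of a digraph. -/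
noncomputable def numArcs (D : Digraph') : ℕ :=
  Nat.card {a : ℕ × ℕ // D.Adj a.1 a.2}

/-- The set `S` induces an acyclic subdigraph of `D` (no directed cycle inside `S`). -/
def AcyclicOn (D : Digraph') (S : Set ℕ) : Prop :=
  ∀ v, ¬ Relation.TransGen (fun a b => a ∈ S ∧ b ∈ S ∧ D.Adj a b) v v

/-- A digraph is acyclic if it contains no directed cycle. -/
def IsAcyclic (D : Digraph') : Prop :=
  ∀ v, ¬ Relation.TransGen D.Adj v v

/-- `φ` is an acyclic `k`-coloring of `D`: it uses colors `< k` on the vertices and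
every color class induces an acyclic subdigraph. -/
def IsAcyclicColoring (D : Digraph') (k : ℕ) (φ : ℕ → ℕ) : Prop :=
  (∀ v ∈ D.verts, φ v < k) ∧ ∀ c, D.AcyclicOn {v | v ∈ D.verts ∧ φ v = c}

/-- `D` admits an acyclic `k`-coloring. -/
def Colorable (D : Digraph') (k : ℕ) : Prop := ∃ φ, D.IsAcyclicColoring k φ

/-- The dichromatic number of `D`. -/
noncomputable def dichrom (D : Digraph') : ℕ := sInf {k | D.Colorable k}

/-- `H` is a subdigraph of `D`. -/
def IsSubdigraph (H D : Digraph') : Prop :=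
  H.verts ⊆ D.verts ∧ ∀ ⦃u v⦄, H.Adj u v → D.Adj u v

/-- `D` is critical: every proper subdigraph has a strictly smaller dichromatic number. -/
def Critical (D : Digraph') : Prop :=
  ∀ H, IsSubdigraph H D → H ≠ D → dichrom H < dichrom D

/-- `D` is `k`-critical. -/
def IsCritical (D : Digraph') (k : ℕ) : Prop := D.dichrom = k ∧ D.Critical

/-- The digraph obtained from `D` by deleting the vertex `x`. -/
def delVert (D : Digraph') (x : ℕ) : Digraph' where
  verts := D.verts.erase x
  Adj u v := D.Adj u v ∧ u ≠ x ∧ v ≠ x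
  adj_mem := by
    intro u v h
    rcases h with ⟨h, hu, hv⟩
    exact ⟨Finset.mem_erase.2 ⟨hu, (D.adj_mem h).1⟩, Finset.mem_erase.2 ⟨hv, (D.adj_mem h).2⟩⟩
  loopless := by intro v h; exact D.loopless v h.1

/-- The digraph obtained from `D` by deleting the arc `xy`. -/
def delArc (D : Digraph') (x y : ℕ) : Digraph' where
  verts := D.verts
  Adj u v := D.Adj u v ∧ ¬(u = x ∧ v = y)
  adj_mem := by intro u v h; exact D.adj_mem h.1
  loopless := by intro v h; exact D.loopless v h.1

/-- The out-degree of `v` in `D`. -/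
noncomputable def outDeg (D : Digraph') (v : ℕ) : ℕ := Nat.card {w // D.Adj v w}

/-- The in-degree of `v` in `D`. -/
noncomputable def inDeg (D : Digraph') (v : ℕ) : ℕ := Nat.card {w // D.Adj w v}

/-- `D` is the complete biorientation of a complete graph on its vertex set. -/
def IsBiorientedComplete (D : Digraph') : Prop :=
  ∀ u v, D.Adj u v ↔ (u ∈ D.verts ∧ v ∈ D.verts ∧ u ≠ v)

/-- `D` is a directed cycle (of length at least `2`; length `2` is a digon):
every vertex has out-degree and in-degree one and `D` is strongly connected. -/
def IsDirectedCycle (D : Digraph') : Prop :=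
  2 ≤ D.verts.card ∧
  (∀ v ∈ D.verts, D.outDeg v = 1 ∧ D.inDeg v = 1) ∧
  ∀ u ∈ D.verts, ∀ v ∈ D.verts, Relation.TransGen D.Adj u v

/-- `D` is the Dirac join of the disjoint digraphs `D₁` and `D₂`: the union of `D₁`
and `D₂` together with all arcs in both directions between them. -/
def IsDiracJoin (D D₁ D₂ : Digraph') : Prop :=
  Disjoint D₁.verts D₂.verts ∧
  D.verts = D₁.verts ∪ D₂.verts ∧
  ∀ u v, D.Adj u v ↔ (D₁.Adj u v ∨ D₂.Adj u v ∨
    (u ∈ D₁.verts ∧ v ∈ D₂.verts) ∨ (u ∈ D₂.verts ∧ v ∈ D₁.verts))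

/-- `v` is a dominating vertex of `D`: it is joined by arcs in both directions to
all other vertices of `D`. -/
def IsDominatingVertex (D : Digraph') (v : ℕ) : Prop :=
  v ∈ D.verts ∧ ∀ u ∈ D.verts, u ≠ v → D.Adj u v ∧ D.Adj v u

/-- The number of dominating vertices of `D`. -/
noncomputable def numDomVerts (D : Digraph') : ℕ :=
  {v | D.IsDominatingVertex v}.ncard

/-- `C` is a dominating subdigraph of `D`. -/
def IsDominatingSubdigraph (D C : Digraph') : Prop :=
  ∃ D'' : Digraph', D''.verts.Nonempty ∧ IsDiracJoin D C D''

/-- The number of dominating directed cycles of order at least three of `D`. -/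
noncomputable def numDomCycles (D : Digraph') : ℕ :=
  {C : Digraph' | IsSubdigraph C D ∧ C.IsDirectedCycle ∧ 3 ≤ C.order ∧
    D.IsDominatingSubdigraph C}.ncard

/-- The complement of `D` (on the same vertex set). -/
def compl (D : Digraph') : Digraph' where
  verts := D.verts
  Adj u v := u ∈ D.verts ∧ v ∈ D.verts ∧ u ≠ v ∧ ¬ D.Adj u v
  adj_mem := by intro u v h; exact ⟨h.1, h.2.1⟩
  loopless := by intro v h; exact h.2.2.1 rfl

/-- `D` is connected (its underlying undirected graph is connected). -/
def Connected (D : Digraph') : Prop :=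
  D.verts.Nonempty ∧ ∀ u ∈ D.verts, ∀ v ∈ D.verts,
    Relation.ReflTransGen (fun a b => D.Adj a b ∨ D.Adj b a) u v

/-- `φ` is a proper `k`-coloring of the symmetric digraph `D` viewed as a graph. -/
def IsProperColoring (D : Digraph') (k : ℕ) (φ : ℕ → ℕ) : Prop :=
  (∀ v ∈ D.verts, φ v < k) ∧ ∀ u v, D.Adj u v → φ u ≠ φ v

/-- The chromatic number of (the underlying graph of) `D`. -/
noncomputable def chrom (D : Digraph') : ℕ := sInf {k | ∃ φ, D.IsProperColoring k φ}

/-- `D` belongs to the (complete biorientation of the) Gallai--Dirac class `DG(k)`. -/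
def InDGClass (D : Digraph') (k : ℕ) : Prop :=
  ∃ (X Y₁ Y₂ : Finset ℕ) (v₁ v₂ : ℕ),
    X.Nonempty ∧ Y₁.Nonempty ∧ Y₂.Nonempty ∧
    Disjoint X Y₁ ∧ Disjoint X Y₂ ∧ Disjoint Y₁ Y₂ ∧
    v₁ ∉ X ∪ Y₁ ∪ Y₂ ∧ v₂ ∉ X ∪ Y₁ ∪ Y₂ ∧ v₁ ≠ v₂ ∧
    Y₁.card + Y₂.card = k - 1 ∧ X.card + 1 = k - 1 ∧
    D.verts = X ∪ Y₁ ∪ Y₂ ∪ {v₁, v₂} ∧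
    (∀ u v, D.Adj u v ↔ (u ≠ v ∧
      ((u ∈ X ∧ v ∈ X) ∨ (u ∈ Y₁ ∪ Y₂ ∧ v ∈ Y₁ ∪ Y₂) ∨
       (u = v₁ ∧ v ∈ X ∪ Y₁) ∨ (v = v₁ ∧ u ∈ X ∪ Y₁) ∨
       (u = v₂ ∧ v ∈ X ∪ Y₂) ∨ (v = v₂ ∧ u ∈ X ∪ Y₂))))

end Digraph'

/-- The minimum number of arcs in a `k`-critical digraph of order `n`. -/
noncomputable def extArcs (k n : ℕ) : ℕ :=
  sInf {m | ∃ D : Digraph', D.IsCritical k ∧ D.order = n ∧ D.numArcs = m}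

open Digraph'

/-!
Colouring the two sides of a Dirac join with disjoint palettes is optimal, because a colour
shared by the two sides spans a digon; hence `χ(D₁ ⊞ D₂) = χ(D₁) + χ(D₂)`. A digraph is
critical iff deleting any single vertex or arc lowers `χ`. Deleting a vertex or arc inside `Dᵢ`
gives the join of `Dᵢ` minus that element with the other side, so the additivity of `χ`
transfers criticality in both directions. If both sides are critical, deleting a cross arc `xy`
(`x ∈ D₁`, `y ∈ D₂`) lowers `χ` too: colour `D₁ - x` and `D₂ - y` with `χ(D₁) - 1` and
`χ(D₂) - 1` colours and `{x, y}` with one more colour, which is acyclic once `xy` is gone.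
-/

namespace Digraph'

variable {D D' H A B : Digraph'} {S T : Set ℕ} {k l : ℕ}

lemma ext (hV : H.verts = D.verts) (hE : ∀ u v, H.Adj u v ↔ D.Adj u v) : H = D := by
  obtain ⟨V, E, _, _⟩ := H
  obtain ⟨V', E', _, _⟩ := D
  obtain rfl : V = V' := hV
  obtain rfl : E = E' := funext₂ fun u v => propext (hE u v)
  rfl

lemma AcyclicOn.mono (h : D'.AcyclicOn T) (hST : S ⊆ T)
    (hE : ∀ u ∈ S, ∀ v ∈ S, D.Adj u v → D'.Adj u v) : D.AcyclicOn S := fun v hv =>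
  h v (Relation.TransGen.mono (fun a b ⟨ha, hb, hab⟩ => ⟨hST ha, hST hb, hE a ha b hb hab⟩) v v hv)

lemma AcyclicOn.asymm (h : D.AcyclicOn S) {u v : ℕ} (hu : u ∈ S) (hv : v ∈ S)
    (huv : D.Adj u v) : ¬ D.Adj v u := fun hvu =>
  h u (.head ⟨hu, hv, huv⟩ (.single ⟨hv, hu, hvu⟩))

lemma acyclicOn_of_subsingleton (hS : S.Subsingleton) : D.AcyclicOn S := by
  intro v hv
  obtain ⟨w, ⟨hv, hw, hvw⟩, -⟩ := Relation.TransGen.head'_iff.1 hv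
  exact D.loopless v (hS hv hw ▸ hvw)

lemma acyclicOn_pair {x y : ℕ} (hxy : ¬ D.Adj x y) : D.AcyclicOn {x, y} := by
  have step : ∀ a b, a ∈ ({x, y} : Set ℕ) → b ∈ ({x, y} : Set ℕ) → D.Adj a b →
      a = y ∧ b = x ∧ a ≠ b := by
    rintro a b (rfl | rfl) (rfl | rfl) hab
    · exact absurd hab (D.loopless _)
    · exact absurd hab hxy
    · exact ⟨rfl, rfl, fun h => D.loopless _ (h ▸ hab)⟩
    · exact absurd hab (D.loopless _)
  intro v hcyc
  obtain ⟨w, ⟨hv, hw, hvw⟩, -⟩ := Relation.TransGen.head'_iff.1 hcyc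
  obtain ⟨u, -, ⟨hu, -, huv⟩⟩ := Relation.TransGen.tail'_iff.1 hcyc
  obtain ⟨-, rfl, hne⟩ := step v w hv hw hvw
  exact hne (step u v hu hv huv).2.1

def ColorableOn (D : Digraph') (S : Set ℕ) (k : ℕ) : Prop :=
  ∃ φ : ℕ → ℕ, (∀ v ∈ S, φ v < k) ∧ ∀ c, D.AcyclicOn {v | v ∈ S ∧ φ v = c}

lemma colorable_iff_colorableOn : D.Colorable k ↔ D.ColorableOn D.verts k := Iff.rfl

lemma ColorableOn.mono (h : D'.ColorableOn T k) (hST : S ⊆ T)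
    (hE : ∀ u ∈ S, ∀ v ∈ S, D.Adj u v → D'.Adj u v) : D.ColorableOn S k := by
  obtain ⟨φ, hlt, hφ⟩ := h
  exact ⟨φ, fun v hv => hlt v (hST hv), fun c =>
    (hφ c).mono (fun v hv => ⟨hST hv.1, hv.2⟩) fun u hu v hv => hE u hu.1 v hv.1⟩

lemma ColorableOn.union (hS : D.ColorableOn S k) (hT : D.ColorableOn T l) :
    D.ColorableOn (S ∪ T) (k + l) := by
  classical
  obtain ⟨φ, hφlt, hφ⟩ := hS
  obtain ⟨ψ, hψlt, hψ⟩ := hT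
  refine ⟨fun v => if v ∈ S then φ v else k + ψ v, fun v hv => ?_, fun c => ?_⟩
  · by_cases hvS : v ∈ S
    · simpa [hvS] using (hφlt v hvS).trans_le (Nat.le_add_right k l)
    · simpa [hvS] using hψlt v (hv.resolve_left hvS)
  by_cases hc : c < k
  · refine (hφ c).mono (fun v ⟨hv, hvc⟩ => ?_) fun _ _ _ _ => id
    by_cases hvS : v ∈ S
    · simp only [hvS, if_true] at hvc
      exact ⟨hvS, hvc⟩
    · simp only [hvS, if_false] at hvc
      omega
  · refine (hψ (c - k)).mono (fun v ⟨hv, hvc⟩ => ?_) fun _ _ _ _ => id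
    by_cases hvS : v ∈ S
    · simp only [hvS, if_true] at hvc
      exact absurd (hvc ▸ hφlt v hvS) hc
    · simp only [hvS, if_false] at hvc
      exact ⟨hv.resolve_left hvS, by omega⟩

lemma AcyclicOn.colorableOn_one (h : D.AcyclicOn S) : D.ColorableOn S 1 :=
  ⟨fun _ => 0, fun _ _ => Nat.one_pos, fun _ => h.mono (fun _ hv => hv.1) fun _ _ _ _ => id⟩

lemma colorableOn_card_image (s : Finset ℕ) {φ : ℕ → ℕ}
    (h : ∀ c, D.AcyclicOn {v | v ∈ s ∧ φ v = c}) : D.ColorableOn s (s.image φ).card := by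
  classical
  set C := s.image φ
  let e : ℕ → ℕ := fun c => if hc : c ∈ C then C.equivFin ⟨c, hc⟩ else 0
  have hC : ∀ v ∈ s, φ v ∈ C := fun v hv => Finset.mem_image_of_mem φ hv
  have he : ∀ v (hv : v ∈ s), e (φ v) = C.equivFin ⟨φ v, hC v hv⟩ :=
    fun v hv => dif_pos (hC v hv)
  refine ⟨e ∘ φ, fun v hv => (he v hv).trans_lt (C.equivFin _).isLt, fun c => ?_⟩
  by_cases hc : ∃ v₀ ∈ s, e (φ v₀) = c
  · obtain ⟨v₀, hv₀, rfl⟩ := hc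
    refine (h (φ v₀)).mono (fun v ⟨hv, hvc⟩ => ⟨hv, ?_⟩) fun _ _ _ _ => id
    have := C.equivFin.injective (Fin.ext ((he v hv).symm.trans (hvc.trans (he v₀ hv₀))))
    exact congrArg Subtype.val this
  · exact (h 0).mono (fun v ⟨hv, hvc⟩ => absurd ⟨v, hv, hvc⟩ hc) fun _ _ _ _ => id

lemma Colorable.mono (h : D.Colorable k) (hkl : k ≤ l) : D.Colorable l := by
  obtain ⟨φ, hlt, hφ⟩ := h
  exact ⟨φ, fun v hv => (hlt v hv).trans_le hkl, hφ⟩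

lemma colorable_order (D : Digraph') : D.Colorable D.order := by
  classical
  simpa [colorable_iff_colorableOn, order] using
    colorableOn_card_image (D := D) D.verts (φ := id) fun c =>
      acyclicOn_of_subsingleton fun a ha b hb => ha.2.trans hb.2.symm

lemma colorable_dichrom (D : Digraph') : D.Colorable D.dichrom :=
  Nat.sInf_mem (s := {k | D.Colorable k}) ⟨D.order, D.colorable_order⟩

lemma dichrom_le_iff : D.dichrom ≤ k ↔ D.Colorable k :=
  ⟨D.colorable_dichrom.mono, fun h => Nat.sInf_le h⟩

lemma dichrom_mono (h : IsSubdigraph H D) : H.dichrom ≤ D.dichrom :=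
  dichrom_le_iff.2 <|
    ColorableOn.mono D.colorable_dichrom (Finset.coe_subset.2 h.1) fun _ _ _ _ huv => h.2 huv

lemma delVert_isSubdigraph (D : Digraph') (x : ℕ) : IsSubdigraph (D.delVert x) D :=
  ⟨Finset.erase_subset _ _, fun _ _ h => h.1⟩

lemma delArc_isSubdigraph (D : Digraph') (x y : ℕ) : IsSubdigraph (D.delArc x y) D :=
  ⟨subset_rfl, fun _ _ h => h.1⟩

lemma delVert_ne {x : ℕ} (hx : x ∈ D.verts) : D.delVert x ≠ D := fun h =>
  Finset.notMem_erase x D.verts (show x ∈ (D.delVert x).verts by rwa [h])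

lemma delArc_ne {x y : ℕ} (hxy : D.Adj x y) : D.delArc x y ≠ D := fun h =>
  (show ¬ (D.delArc x y).Adj x y from fun h' => h'.2 ⟨rfl, rfl⟩) (by rwa [h])

lemma IsSubdigraph.exists_delVert_or_delArc (h : IsSubdigraph H D) (hne : H ≠ D) :
    (∃ w ∈ D.verts, IsSubdigraph H (D.delVert w)) ∨
      ∃ u v, D.Adj u v ∧ IsSubdigraph H (D.delArc u v) := by
  by_cases hV : H.verts = D.verts
  · have : ∃ u v, D.Adj u v ∧ ¬ H.Adj u v := by
      by_contra! hE
      exact hne (ext hV fun u v => ⟨fun huv => h.2 huv, hE u v⟩)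
    obtain ⟨u, v, huv, hHuv⟩ := this
    refine .inr ⟨u, v, huv, hV.le, fun a b hab => ⟨h.2 hab, ?_⟩⟩
    rintro ⟨rfl, rfl⟩
    exact hHuv hab
  · obtain ⟨w, hwD, hwH⟩ := Finset.exists_of_ssubset (Finset.ssubset_iff_subset_ne.2 ⟨h.1, hV⟩)
    refine .inl ⟨w, hwD, fun a ha => Finset.mem_erase.2 ⟨?_, h.1 ha⟩, fun a b hab => ?_⟩
    · rintro rfl
      exact hwH ha
    · obtain ⟨ha, hb⟩ := H.adj_mem hab
      exact ⟨h.2 hab, fun e => hwH (e ▸ ha), fun e => hwH (e ▸ hb)⟩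

lemma critical_iff : D.Critical ↔ (∀ w ∈ D.verts, (D.delVert w).dichrom < D.dichrom) ∧
    ∀ u v, D.Adj u v → (D.delArc u v).dichrom < D.dichrom := by
  refine ⟨fun h => ⟨fun w hw => h _ (D.delVert_isSubdigraph w) (delVert_ne hw),
    fun u v huv => h _ (D.delArc_isSubdigraph u v) (delArc_ne huv)⟩, ?_⟩
  rintro ⟨hV, hE⟩ H hH hne
  rcases hH.exists_delVert_or_delArc hne with ⟨w, hw, hHw⟩ | ⟨u, v, huv, hHuv⟩
  · exact (dichrom_mono hHw).trans_lt (hV w hw)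
  · exact (dichrom_mono hHuv).trans_lt (hE u v huv)

namespace IsDiracJoin

variable (hJ : IsDiracJoin D A B)
include hJ

lemma symm : IsDiracJoin D B A :=
  ⟨hJ.1.symm, hJ.2.1.trans (Finset.union_comm _ _), fun u v => (hJ.2.2 u v).trans (by tauto)⟩

lemma left_subset : A.verts ⊆ D.verts := hJ.2.1 ▸ Finset.subset_union_left

lemma adj_of_left {u v : ℕ} (huv : A.Adj u v) : D.Adj u v := (hJ.2.2 u v).2 (.inl huv)

lemma adj_of_mem {u v : ℕ} (hu : u ∈ A.verts) (hv : v ∈ B.verts) : D.Adj u v :=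
  (hJ.2.2 u v).2 (.inr (.inr (.inl ⟨hu, hv⟩)))

lemma left_adj {u v : ℕ} (hu : u ∈ A.verts) (hv : v ∈ A.verts) (huv : D.Adj u v) :
    A.Adj u v := by
  have hA : ∀ {w}, w ∈ A.verts → w ∉ B.verts := fun hw => Finset.disjoint_left.1 hJ.1 hw
  rcases (hJ.2.2 u v).1 huv with h | h | h | h
  exacts [h, (hA hu (B.adj_mem h).1).elim, (hA hv h.2).elim, (hA hu h.1).elim]

lemma colorableOn_left (hA : A.Colorable k) : D.ColorableOn A.verts k :=
  ColorableOn.mono hA subset_rfl fun _ hu _ hv huv => hJ.left_adj hu hv huv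

lemma dichrom_le : D.dichrom ≤ A.dichrom + B.dichrom := by
  refine dichrom_le_iff.2 (ColorableOn.mono
    ((hJ.colorableOn_left A.colorable_dichrom).union (hJ.symm.colorableOn_left B.colorable_dichrom))
    ?_ fun _ _ _ _ => id)
  rw [hJ.2.1, Finset.coe_union]

lemma le_dichrom : A.dichrom + B.dichrom ≤ D.dichrom := by
  classical
  obtain ⟨φ, hφlt, hφ⟩ := D.colorable_dichrom
  have restrict : ∀ {C : Digraph'}, IsSubdigraph C D → C.dichrom ≤ (C.verts.image φ).card :=
    fun hC => dichrom_le_iff.2 <| colorableOn_card_image _ fun c =>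
      (hφ c).mono (fun v hv => ⟨hC.1 hv.1, hv.2⟩) fun _ _ _ _ huv => hC.2 huv
  have hdisj : Disjoint (A.verts.image φ) (B.verts.image φ) := by
    refine Finset.disjoint_left.2 fun c hcA hcB => ?_
    obtain ⟨u, hu, rfl⟩ := Finset.mem_image.1 hcA
    obtain ⟨v, hv, hvu⟩ := Finset.mem_image.1 hcB
    exact (hφ (φ u)).asymm (v := v) ⟨hJ.left_subset hu, rfl⟩ ⟨hJ.symm.left_subset hv, hvu⟩
      (hJ.adj_of_mem hu hv) (hJ.symm.adj_of_mem hv hu)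
  calc A.dichrom + B.dichrom ≤ (A.verts.image φ).card + (B.verts.image φ).card :=
        add_le_add (restrict ⟨hJ.left_subset, fun _ _ => hJ.adj_of_left⟩)
          (restrict ⟨hJ.symm.left_subset, fun _ _ => hJ.symm.adj_of_left⟩)
    _ = (D.verts.image φ).card := by
        rw [← Finset.card_union_of_disjoint hdisj, ← Finset.image_union, hJ.2.1]
    _ ≤ (Finset.range D.dichrom).card :=
        Finset.card_le_card fun c hc => by
          obtain ⟨v, hv, rfl⟩ := Finset.mem_image.1 hc
          exact Finset.mem_range.2 (hφlt v hv)
    _ = D.dichrom := Finset.card_range _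

lemma dichrom_eq : D.dichrom = A.dichrom + B.dichrom := hJ.dichrom_le.antisymm hJ.le_dichrom

lemma delVert_left {x : ℕ} (hx : x ∈ A.verts) :
    IsDiracJoin (D.delVert x) (A.delVert x) B := by
  obtain ⟨hdisj, hV, hE⟩ := hJ
  have hxB : x ∉ B.verts := Finset.disjoint_left.1 hdisj hx
  refine ⟨Finset.disjoint_of_subset_left (Finset.erase_subset _ _) hdisj, ?_, fun u v => ?_⟩
  · simp only [delVert, hV, Finset.erase_union_distrib, Finset.erase_eq_of_notMem hxB]
  · have := @B.adj_mem u v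
    simp only [delVert, hE, Finset.mem_erase]
    grind

lemma delArc_left {x y : ℕ} (hxy : A.Adj x y) :
    IsDiracJoin (D.delArc x y) (A.delArc x y) B := by
  obtain ⟨hdisj, hV, hE⟩ := hJ
  have hxB : x ∉ B.verts := Finset.disjoint_left.1 hdisj (A.adj_mem hxy).1
  have hyB : y ∉ B.verts := Finset.disjoint_left.1 hdisj (A.adj_mem hxy).2
  refine ⟨hdisj, hV, fun u v => ?_⟩
  have := @B.adj_mem u v
  simp only [delArc, hE]
  grind

lemma colorableOn_erase_left (x : ℕ) : D.ColorableOn (A.verts.erase x) (A.delVert x).dichrom :=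
  ColorableOn.mono (A.delVert x).colorable_dichrom subset_rfl fun _ hu _ hv huv =>
    ⟨hJ.left_adj (Finset.mem_of_mem_erase hu) (Finset.mem_of_mem_erase hv) huv,
      Finset.ne_of_mem_erase hu, Finset.ne_of_mem_erase hv⟩

lemma dichrom_delArc_le (x y : ℕ) :
    (D.delArc x y).dichrom ≤ (A.delVert x).dichrom + (B.delVert y).dichrom + 1 := by
  have hsides : (D.delArc x y).ColorableOn (↑(A.verts.erase x) ∪ ↑(B.verts.erase y))
      ((A.delVert x).dichrom + (B.delVert y).dichrom) :=
    ((hJ.colorableOn_erase_left x).union (hJ.symm.colorableOn_erase_left y)).mono subset_rfl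
      fun _ _ _ _ huv => huv.1
  have hpair : (D.delArc x y).ColorableOn {x, y} 1 :=
    (acyclicOn_pair (D := D.delArc x y) fun h => h.2 ⟨rfl, rfl⟩).colorableOn_one
  refine dichrom_le_iff.2 ((hsides.union hpair).mono (fun v hv => ?_) fun _ _ _ _ => id)
  have : v ∈ A.verts ∨ v ∈ B.verts := Finset.mem_union.1 (hJ.2.1 ▸ hv)
  simp only [Set.mem_union, Finset.mem_coe, Finset.mem_erase, Set.mem_insert_iff,
    Set.mem_singleton_iff]
  tauto

lemma critical_left (hD : D.Critical) : A.Critical := by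
  obtain ⟨hV, hE⟩ := critical_iff.1 hD
  refine critical_iff.2 ⟨fun w hw => ?_, fun u v huv => ?_⟩
  · have := hV w (hJ.left_subset hw)
    rw [(hJ.delVert_left hw).dichrom_eq, hJ.dichrom_eq] at this
    omega
  · have := hE u v (hJ.adj_of_left huv)
    rw [(hJ.delArc_left huv).dichrom_eq, hJ.dichrom_eq] at this
    omega

lemma critical (hA : A.Critical) (hB : B.Critical) : D.Critical := by
  obtain ⟨hAV, hAE⟩ := critical_iff.1 hA
  obtain ⟨hBV, hBE⟩ := critical_iff.1 hB
  refine critical_iff.2 ⟨fun w hw => ?_, fun u v huv => ?_⟩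
  · rw [hJ.dichrom_eq]
    rcases Finset.mem_union.1 (hJ.2.1 ▸ hw) with hw | hw
    · rw [(hJ.delVert_left hw).dichrom_eq]
      exact Nat.add_lt_add_right (hAV w hw) _
    · rw [(hJ.symm.delVert_left hw).dichrom_eq, add_comm]
      exact Nat.add_lt_add_left (hBV w hw) _
  · rw [hJ.dichrom_eq]
    rcases (hJ.2.2 u v).1 huv with huv | huv | ⟨hu, hv⟩ | ⟨hu, hv⟩
    · rw [(hJ.delArc_left huv).dichrom_eq]
      exact Nat.add_lt_add_right (hAE u v huv) _
    · rw [(hJ.symm.delArc_left huv).dichrom_eq, add_comm]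
      exact Nat.add_lt_add_left (hBE u v huv) _
    · have := hJ.dichrom_delArc_le u v
      have := hAV u hu
      have := hBV v hv
      omega
    · have := hJ.symm.dichrom_delArc_le u v
      have := hAV v hv
      have := hBV u hu
      omega

end IsDiracJoin

end Digraph'

theorem stmt9_general (D D₁ D₂ : Digraph')
    (hJ : Digraph'.IsDiracJoin D D₁ D₂) :
    D.Critical ↔ (D₁.Critical ∧ D₂.Critical) :=
  ⟨fun hD => ⟨hJ.critical_left hD, hJ.symm.critical_left hD⟩, fun ⟨h₁, h₂⟩ => hJ.critical h₁ h₂⟩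

/-- The Dirac join of two disjoint non-empty digraphs is critical iff both parts
are critical. -/
theorem stmt9 (D D₁ D₂ : Digraph') (h1 : D₁.verts.Nonempty) (h2 : D₂.verts.Nonempty)
    (hJ : Digraph'.IsDiracJoin D D₁ D₂) :
    D.Critical ↔ (D₁.Critical ∧ D₂.Critical) :=
  stmt9_general D D₁ D₂ hJ
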